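/- arXiv:1312.4222 — 6 statements merged into one kernel-verified Lean document; each statement's English description precedes it below -/
import Mathlib

section
/- Let f₁ and f₂ be nonconstant maps in C(Σ, M). Then there exist ε₁ > 0, ε₂ > 0 and compact subsets K₁ and K₂ of ℂ, neither containing 0, such that: (a) for every h ∈ C(Σ, M) with d(h, f₁) < ε₁ and every nonzero a ∈ ℂ with a ∉ K₁, one has d(h ∘ g_a, f₂) ≥ ε₂; and (b) for every h ∈ C(Σ, M) with d(h, f₂) < ε₂ and every nonzero a ∈ ℂ with a ∉ K₂, one has d(h ∘ g_a, f₁) ≥ ε₁. (This is the properness of the reparametrization action of the subgroup G₂ ≅ ℂ* of PSL(2,ℂ) fixing the two marked points 0 and ∞.) -/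
open OnePoint Filter Topology

noncomputable def gA (a : ℂ) (ha : a ≠ 0) : C(OnePoint ℂ, OnePoint ℂ) where
  toFun := OnePoint.map (fun z => a * z)
  continuous_toFun := (Homeomorph.onePointCongr (Homeomorph.mulLeft₀ a ha)).continuous

lemma gA_coe (a : ℂ) (ha : a ≠ 0) (z : ℂ) : gA a ha ↑z = ↑(a * z) := rfl

lemma exists_ne_coe {M : Type*} [TopologicalSpace M] [T2Space M] (f : C(OnePoint ℂ, M))
    (hf : ∃ x y, f x ≠ f y) : ∃ u v : ℂ, u ≠ 0 ∧ v ≠ 0 ∧ f u ≠ f v := by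
  by_contra hc
  push_neg at hc
  have hdense : Dense ((fun z : ℂ => (z : OnePoint ℂ)) '' {z : ℂ | z ≠ 0}) := by
    have h1 : DenseRange (fun z : ℂ => (z : OnePoint ℂ)) := OnePoint.denseRange_coe
    have h2 : Dense {z : ℂ | z ≠ 0} := dense_compl_singleton 0
    exact h1.dense_image OnePoint.continuous_coe h2
  have hconst : ⇑f = fun _ => f ((1:ℂ) : OnePoint ℂ) :=
    Continuous.ext_on hdense f.continuous continuous_const
      (fun x hx => by obtain ⟨z, hz, rfl⟩ := hx; exact hc z 1 hz one_ne_zero)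
  obtain ⟨x, y, hxy⟩ := hf
  exact hxy (by rw [show f x = _ from congrFun hconst x, show f y = _ from congrFun hconst y])

lemma exists_R {M : Type*} [MetricSpace M] (f : C(OnePoint ℂ, M)) {η : ℝ} (hη : 0 < η) :
    ∃ R > 0, ∀ z : ℂ, R ≤ ‖z‖ → dist (f z) (f ∞) < η := by
  have h : Tendsto (fun z : ℂ => f ↑z) (cocompact ℂ) (𝓝 (f ∞)) := by
    have := (f.continuous.tendsto ∞).comp OnePoint.tendsto_coe_infty
    rwa [coclosedCompact_eq_cocompact] at this
  have hev := h.eventually (Metric.ball_mem_nhds (f ∞) hη)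
  rw [Filter.eventually_iff, Filter.mem_cocompact] at hev
  obtain ⟨K, hK, hKs⟩ := hev
  obtain ⟨R, hR⟩ := hK.isBounded.subset_closedBall 0
  refine ⟨max R 0 + 1, by positivity, fun z hz => ?_⟩
  have hzK : z ∉ K := fun h' => by
    have h1 := hR h'
    have h2 : R ≤ max R 0 := le_max_left _ _
    simp only [Metric.mem_closedBall, dist_zero_right] at h1
    linarith
  exact hKs hzK

lemma exists_r {M : Type*} [MetricSpace M] (f : C(OnePoint ℂ, M)) {η : ℝ} (hη : 0 < η) :
    ∃ r > 0, ∀ z : ℂ, ‖z‖ ≤ r → dist (f z) (f (0:ℂ)) < η := by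
  have h : ContinuousAt (fun z : ℂ => f ↑z) 0 := (f.continuous.comp OnePoint.continuous_coe).continuousAt
  rw [Metric.continuousAt_iff] at h
  obtain ⟨δ, hδ, hd⟩ := h η hη
  refine ⟨δ/2, by positivity, fun z hz => hd ?_⟩
  simp only [dist_zero_right]
  linarith

lemma key {M : Type*} [MetricSpace M] [CompactSpace M] (f₁ f₂ : C(OnePoint ℂ, M))
    (x y : ℂ) (hx : x ≠ 0) (hy : y ≠ 0)
    (ε₁ ε₂ η : ℝ) (hη : 0 < η)
    (hlt : 2*ε₂ + 2*ε₁ + 2*η < dist (f₂ x) (f₂ y)) :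
    ∃ K : Set ℂ, IsCompact K ∧ (0:ℂ) ∉ K ∧
      ∀ h : C(OnePoint ℂ, M), dist h f₁ < ε₁ →
        ∀ (a : ℂ) (ha : a ≠ 0), a ∉ K → ε₂ ≤ dist (h.comp (gA a ha)) f₂ := by
  obtain ⟨R, hR, hRd⟩ := exists_R f₁ hη
  obtain ⟨r, hr, hrd⟩ := exists_r f₁ hη
  set m : ℝ := min ‖x‖ ‖y‖ with hm
  set Mx : ℝ := max ‖x‖ ‖y‖ with hMx
  have hm0 : 0 < m := lt_min (norm_pos_iff.mpr hx) (norm_pos_iff.mpr hy)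
  have hMx0 : 0 < Mx := lt_of_lt_of_le hm0 (min_le_max)
  refine ⟨Metric.closedBall 0 (R/m) ∩ {a : ℂ | r/Mx ≤ ‖a‖},
    (isCompact_closedBall 0 _).inter_right (isClosed_le continuous_const continuous_norm),
    ?_, ?_⟩
  · rintro ⟨-, h0⟩
    simp only [Set.mem_setOf_eq, norm_zero] at h0
    have : 0 < r / Mx := by positivity
    linarith
  · intro h hh a ha hK
    by_contra hcon
    push_neg at hcon
    -- pointwise bounds at x, y
    have hbx : dist (h ↑(a*x)) (f₂ ↑x) < ε₂ := by
      have := ContinuousMap.dist_apply_le_dist (f := h.comp (gA a ha)) (g := f₂) (↑x)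
      simpa [ContinuousMap.comp_apply, gA_coe] using lt_of_le_of_lt this hcon
    have hby : dist (h ↑(a*y)) (f₂ ↑y) < ε₂ := by
      have := ContinuousMap.dist_apply_le_dist (f := h.comp (gA a ha)) (g := f₂) (↑y)
      simpa [ContinuousMap.comp_apply, gA_coe] using lt_of_le_of_lt this hcon
    have hhx : dist (h ↑(a*x)) (f₁ ↑(a*x)) < ε₁ :=
      lt_of_le_of_lt (ContinuousMap.dist_apply_le_dist _) hh
    have hhy : dist (h ↑(a*y)) (f₁ ↑(a*y)) < ε₁ :=
      lt_of_le_of_lt (ContinuousMap.dist_apply_le_dist _) hh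
    -- the middle bound: either |a| large or small
    have hmid : dist (f₁ ↑(a*x)) (f₁ ↑(a*y)) < 2*η := by
      simp only [Set.mem_inter_iff, Metric.mem_closedBall, dist_zero_right, Set.mem_setOf_eq,
        not_and_or, not_le] at hK
      rcases hK with hK | hK
      · -- ‖a‖ > R/m : both |ax|,|ay| ≥ R
        have h1 : R ≤ ‖a*x‖ := by
          rw [norm_mul]
          calc R = (R/m) * m := by field_simp
          _ ≤ ‖a‖ * ‖x‖ := by
              apply mul_le_mul hK.le (min_le_left _ _) hm0.le (by positivity)
        have h2 : R ≤ ‖a*y‖ := by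
          rw [norm_mul]
          calc R = (R/m) * m := by field_simp
          _ ≤ ‖a‖ * ‖y‖ := by
              apply mul_le_mul hK.le (min_le_right _ _) hm0.le (by positivity)
        calc dist (f₁ ↑(a*x)) (f₁ ↑(a*y)) ≤ dist (f₁ ↑(a*x)) (f₁ ∞) + dist (f₁ ∞) (f₁ ↑(a*y)) :=
              dist_triangle _ _ _
        _ < η + η := by
            have := hRd (a*y) h2
            rw [dist_comm] at this
            exact add_lt_add (hRd (a*x) h1) this
        _ = 2*η := by ring
      · -- ‖a‖ < r/Mx : both |ax|,|ay| ≤ r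
        have h1 : ‖a*x‖ ≤ r := by
          rw [norm_mul]
          calc ‖a‖ * ‖x‖ ≤ (r/Mx) * Mx :=
              mul_le_mul hK.le (le_max_left _ _) (norm_nonneg _) (by positivity)
          _ = r := by field_simp
        have h2 : ‖a*y‖ ≤ r := by
          rw [norm_mul]
          calc ‖a‖ * ‖y‖ ≤ (r/Mx) * Mx :=
              mul_le_mul hK.le (le_max_right _ _) (norm_nonneg _) (by positivity)
          _ = r := by field_simp
        calc dist (f₁ ↑(a*x)) (f₁ ↑(a*y)) ≤ dist (f₁ ↑(a*x)) (f₁ ↑(0:ℂ)) + dist (f₁ ↑(0:ℂ)) (f₁ ↑(a*y)) :=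
              dist_triangle _ _ _
        _ < η + η := by
            have := hrd (a*y) h2
            rw [dist_comm] at this
            exact add_lt_add (hrd (a*x) h1) this
        _ = 2*η := by ring
    have t1 : dist (f₂ ↑x) (f₂ ↑y) ≤ dist (f₂ ↑x) (h ↑(a*x)) + dist (h ↑(a*x)) (h ↑(a*y))
        + dist (h ↑(a*y)) (f₂ ↑y) := dist_triangle4 _ _ _ _
    have t2 : dist (h ↑(a*x)) (h ↑(a*y)) ≤ dist (h ↑(a*x)) (f₁ ↑(a*x))
        + dist (f₁ ↑(a*x)) (f₁ ↑(a*y)) + dist (f₁ ↑(a*y)) (h ↑(a*y)) := dist_triangle4 _ _ _ _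
    have e1 : dist (f₂ ↑x) (h ↑(a*x)) = dist (h ↑(a*x)) (f₂ ↑x) := dist_comm _ _
    have e2 : dist (f₁ ↑(a*y)) (h ↑(a*y)) = dist (h ↑(a*y)) (f₁ ↑(a*y)) := dist_comm _ _
    linarith

/-- Properness of the `ℂ*`-reparametrization action (the subgroup of `PSL(2,ℂ)` fixing the
marked points `0` and `∞`) on the space of nonconstant continuous maps `Σ → M`. -/
theorem properness_Cstar_action {M : Type*} [MetricSpace M] [CompactSpace M]
    (f₁ f₂ : C(OnePoint ℂ, M))
    (hf₁ : ∃ x y, f₁ x ≠ f₁ y) (hf₂ : ∃ x y, f₂ x ≠ f₂ y) :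
    ∃ ε₁ > 0, ∃ ε₂ > 0, ∃ K₁ K₂ : Set ℂ,
      IsCompact K₁ ∧ IsCompact K₂ ∧ (0 : ℂ) ∉ K₁ ∧ (0 : ℂ) ∉ K₂ ∧
      (∀ h : C(OnePoint ℂ, M), dist h f₁ < ε₁ →
        ∀ (a : ℂ) (ha : a ≠ 0), a ∉ K₁ → ε₂ ≤ dist (h.comp (gA a ha)) f₂) ∧
      (∀ h : C(OnePoint ℂ, M), dist h f₂ < ε₂ →
        ∀ (a : ℂ) (ha : a ≠ 0), a ∉ K₂ → ε₁ ≤ dist (h.comp (gA a ha)) f₁) := by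
  obtain ⟨x₁, y₁, hx₁, hy₁, hne₁⟩ := exists_ne_coe f₁ hf₁
  obtain ⟨x₂, y₂, hx₂, hy₂, hne₂⟩ := exists_ne_coe f₂ hf₂
  set δ₁ : ℝ := dist (f₁ ↑x₁) (f₁ ↑y₁) with hδ₁
  set δ₂ : ℝ := dist (f₂ ↑x₂) (f₂ ↑y₂) with hδ₂
  have hδ₁0 : 0 < δ₁ := dist_pos.mpr hne₁
  have hδ₂0 : 0 < δ₂ := dist_pos.mpr hne₂
  set ε₁ : ℝ := min (δ₁/16) (δ₂/16) with hε₁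
  set ε₂ : ℝ := min (δ₂/16) (δ₁/16) with hε₂
  have hε₁0 : 0 < ε₁ := lt_min (by positivity) (by positivity)
  have hε₂0 : 0 < ε₂ := lt_min (by positivity) (by positivity)
  obtain ⟨K₁, hK₁c, hK₁0, hK₁⟩ := key f₁ f₂ x₂ y₂ hx₂ hy₂ ε₁ ε₂ (δ₂/16) (by positivity)
    (by
      have h1 : ε₁ ≤ δ₂/16 := min_le_right _ _
      have h2 : ε₂ ≤ δ₂/16 := min_le_left _ _
      rw [← hδ₂]; linarith)
  obtain ⟨K₂, hK₂c, hK₂0, hK₂⟩ := key f₂ f₁ x₁ y₁ hx₁ hy₁ ε₂ ε₁ (δ₁/16) (by positivity)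
    (by
      have h1 : ε₁ ≤ δ₁/16 := min_le_left _ _
      have h2 : ε₂ ≤ δ₁/16 := min_le_right _ _
      rw [← hδ₁]; linarith)
  exact ⟨ε₁, hε₁0, ε₂, hε₂0, K₁, K₂, hK₁c, hK₂c, hK₁0, hK₂0, hK₁, hK₂⟩
end

section
/- Let f be a nonconstant map in C(Σ, M). Then there exist ε > 0 and a compact subset K of ℂ not containing 0 such that for every h ∈ C(Σ, M) with d(h, f) < ε and every nonzero a ∈ ℂ with a ∉ K, one has d(h ∘ g_a, f) ≥ ε. In particular, for every nonzero a ∉ K the reparametrized map f ∘ g_a satisfies d(f ∘ g_a, f) ≥ ε, i.e. the orbit of f under ℂ* never returns to the ε-neighborhood of f outside the compact set K. -/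
open OnePoint Topology Filter

/-!
A reparametrization `g_a` with `|a|` large pushes a point `p ≠ 0` with `f p ≠ f ∞` close to `∞`,
and one with `|a|` small pushes a point `q ≠ 0` with `f q ≠ f 0` close to `0`. If `h` is uniformly
`ε`-close to `f`, then `h (g_a p)` is close to `f ∞`, hence far from `f p`, so `h ∘ g_a` is far
from `f`; similarly at `q`. The parameters `a` for which neither happens lie in a compact set avoiding `0`.
-/

theorem Dense.exists_mem_apply_ne {X M : Type*} [TopologicalSpace X] [TopologicalSpace M]
    [T2Space M] {f : X → M} (hf : Continuous f) (hnc : ∃ x y, f x ≠ f y) {D : Set X}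
    (hD : Dense D) (c : M) : ∃ x ∈ D, f x ≠ c := by
  by_contra! hfc
  obtain ⟨x, y, hxy⟩ := hnc
  have hconst : f = fun _ => c := hf.ext_on hD continuous_const hfc
  exact hxy (by rw [hconst])

theorem OnePoint.dense_image_coe_compl_singleton {X : Type*} [TopologicalSpace X]
    [NoncompactSpace X] (x : X) [(𝓝[≠] x).NeBot] :
    Dense (((↑) : X → OnePoint X) '' {x}ᶜ) :=
  denseRange_coe.dense_image continuous_coe (dense_compl_singleton x)

theorem exists_isCompact_notMem_forall_of_eventually {X : Type*} [TopologicalSpace X] {x : X}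
    {P : X → Prop} (hP : ∀ᶠ y in cocompact X ⊔ 𝓝 x, P y) :
    ∃ K : Set X, IsCompact K ∧ x ∉ K ∧ ∀ y ∉ K, P y := by
  obtain ⟨hfar, hnear⟩ := eventually_sup.1 hP
  obtain ⟨L, hL, hLP⟩ := mem_cocompact.1 hfar
  refine ⟨L \ interior {y | P y}, hL.diff isOpen_interior,
    fun hx => hx.2 (mem_interior_iff_mem_nhds.2 hnear), fun y hy => ?_⟩
  by_cases hyL : y ∈ L
  · exact interior_subset (not_not.1 fun h => hy ⟨hyL, h⟩)
  · exact hLP hyL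

theorem ContinuousMap.lt_dist_comp_of_dist_lt {X M : Type*} [TopologicalSpace X] [CompactSpace X]
    [MetricSpace M] {f h : C(X, M)} {g : C(X, X)} {x : X} {c : M} {ε : ℝ}
    (hfx : 3 * ε ≤ dist (f x) c) (hgx : dist (f (g x)) c < ε) (hh : dist h f < ε) :
    ε < dist (h.comp g) f := by
  have htri := dist_triangle4 (f x) (h (g x)) (f (g x)) c
  have hx : dist (f x) (h (g x)) ≤ dist (h.comp g) f := by
    rw [dist_comm]; exact dist_apply_le_dist (f := h.comp g) x
  have hgx' : dist (h (g x)) (f (g x)) ≤ dist h f := dist_apply_le_dist (g x)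
  linarith

/-- For a nonconstant continuous map `f : Σ → M`, the `ℂ*`-orbit of any map near `f` never
returns to a small neighbourhood of `f` outside a compact set of reparametrizations; in
particular the orbit of `f` itself never returns to the `ε`-neighbourhood of `f`. -/
theorem orbit_never_returns {M : Type*} [MetricSpace M] [CompactSpace M]
    (f : C(OnePoint ℂ, M)) (hf : ∃ x y, f x ≠ f y) :
    ∃ ε > 0, ∃ K : Set ℂ, IsCompact K ∧ (0 : ℂ) ∉ K ∧
      (∀ h : C(OnePoint ℂ, M), dist h f < ε →
        ∀ (a : ℂ) (ha : a ≠ 0), a ∉ K → ε ≤ dist (h.comp (gA a ha)) f) ∧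
      (∀ (a : ℂ) (ha : a ≠ 0), a ∉ K → ε ≤ dist (f.comp (gA a ha)) f) := by
  have hD := dense_image_coe_compl_singleton (0 : ℂ)
  obtain ⟨_, ⟨p, hp, rfl⟩, hpf⟩ := hD.exists_mem_apply_ne f.continuous hf (f ∞)
  obtain ⟨_, ⟨q, -, rfl⟩, hqf⟩ := hD.exists_mem_apply_ne f.continuous hf (f (0 : ℂ))
  set ε := min (dist (f p) (f ∞)) (dist (f q) (f (0 : ℂ))) / 3 with hε_def
  have hε : 0 < ε := by have := dist_pos.2 hpf; have := dist_pos.2 hqf; positivity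
  have hfar : ∀ᶠ a in cocompact ℂ, dist (f (a * p : ℂ)) (f ∞) < ε := by
    have h := (tendsto_cocompact_mul_right₀ hp).mono_right coclosedCompact_eq_cocompact.ge
    exact ((f.continuous.tendsto ∞).comp (tendsto_coe_infty.comp h)).eventually
      (Metric.ball_mem_nhds _ hε)
  have hnear : ∀ᶠ a in 𝓝 0, dist (f (a * q : ℂ)) (f (0 : ℂ)) < ε := by
    have h : Tendsto (fun a : ℂ => a * q) (𝓝 0) (𝓝 0) := by
      simpa using (continuous_mul_const q).tendsto 0
    exact ((f.continuous.tendsto _).comp (continuous_coe.continuousAt.tendsto.comp h)).eventually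
      (Metric.ball_mem_nhds _ hε)
  obtain ⟨K, hK, h0K, hKc⟩ := exists_isCompact_notMem_forall_of_eventually
    (eventually_sup.2 ⟨hfar.mono fun _ => Or.inl, hnear.mono fun _ => Or.inr⟩)
  have key : ∀ h : C(OnePoint ℂ, M), dist h f < ε →
      ∀ (a : ℂ) (ha : a ≠ 0), a ∉ K → ε ≤ dist (h.comp (gA a ha)) f := by
    intro h hh a ha haK
    rcases hKc a haK with hap | haq
    · refine (ContinuousMap.lt_dist_comp_of_dist_lt (g := gA a ha) (x := p) ?_ hap hh).le
      linarith [min_le_left (dist (f p) (f ∞)) (dist (f q) (f (0 : ℂ)))]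
    · refine (ContinuousMap.lt_dist_comp_of_dist_lt (g := gA a ha) (x := q) ?_ haq hh).le
      linarith [min_le_right (dist (f p) (f ∞)) (dist (f q) (f (0 : ℂ)))]
  exact ⟨ε, hε, K, hK, h0K, key, key f (by rwa [dist_self])⟩
end

section
/- Let f be a nonconstant map in C(Σ, M). Then the stabilizer of f under the ℂ*-reparametrization action, namely the set { a ∈ ℂ : a ≠ 0 and f ∘ g_a = f }, is a compact subset of ℂ (in particular it is bounded, closed in ℂ, and bounded away from 0). -/
open OnePoint

/-! If `f (a * z) = f z` for all `z` with `0 < ‖a‖ < 1`, then `f z = f (aⁿ * z) → f 0` and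
`f 1 = f (a⁻ⁿ) → f ∞`, so `f` is constant. Hence the stabilizer of a nonconstant `f` lies in the
unit circle, and there it is cut out by the closed conditions `f (a * z) = f z`. -/

open Filter Topology

section

variable {𝕜 X : Type*} [NontriviallyNormedField 𝕜]

theorem tendsto_coe_pow_infty [ProperSpace 𝕜] {a : 𝕜} (ha : 1 < ‖a‖) :
    Tendsto (fun n : ℕ => ((a ^ n : 𝕜) : OnePoint 𝕜)) atTop (𝓝 ∞) := by
  refine OnePoint.tendsto_coe_infty.comp ?_
  rw [coclosedCompact_eq_cocompact, ← Metric.cobounded_eq_cocompact,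
    ← tendsto_norm_atTop_iff_cobounded]
  simpa using tendsto_pow_atTop_atTop_of_one_lt ha

theorem mul_invariant_inv {f : OnePoint 𝕜 → X} {a : 𝕜} (ha : a ≠ 0)
    (h : ∀ z : 𝕜, f ↑(a * z) = f ↑z) (z : 𝕜) : f ↑(a⁻¹ * z) = f ↑z := by
  rw [← h, mul_inv_cancel_left₀ ha]

theorem apply_eq_of_tendsto_pow_mul [TopologicalSpace X] [T2Space X] {f : OnePoint 𝕜 → X}
    (hf : Continuous f) {a : 𝕜} (h : ∀ z : 𝕜, f ↑(a * z) = f ↑z) {z : 𝕜} {p : OnePoint 𝕜}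
    (hp : Tendsto (fun n : ℕ => ((a ^ n * z : 𝕜) : OnePoint 𝕜)) atTop (𝓝 p)) :
    f z = f p := by
  have hpow : ∀ n : ℕ, f ↑(a ^ n * z) = f ↑z := by
    intro n
    induction n with
    | zero => simp
    | succ n ih => rw [pow_succ', mul_assoc, h, ih]
  refine tendsto_nhds_unique ?_ ((hf.tendsto p).comp hp)
  simp only [Function.comp_def, hpow, tendsto_const_nhds]

theorem eq_const_of_mul_invariant [ProperSpace 𝕜] [TopologicalSpace X] [T2Space X]
    {f : OnePoint 𝕜 → X} (hf : Continuous f) {a : 𝕜} (ha₀ : a ≠ 0) (ha : ‖a‖ < 1)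
    (h : ∀ z : 𝕜, f ↑(a * z) = f ↑z) (x : OnePoint 𝕜) : f x = f ↑(0 : 𝕜) := by
  have eq_zero (z : 𝕜) : f z = f ↑(0 : 𝕜) := by
    refine apply_eq_of_tendsto_pow_mul hf h ((continuous_coe.tendsto 0).comp ?_)
    simpa using (tendsto_pow_atTop_nhds_zero_of_norm_lt_one ha).mul_const z
  induction x using OnePoint.rec with
  | infty =>
    have ha' : 1 < ‖a⁻¹‖ := by
      rw [norm_inv]
      exact (one_lt_inv₀ (norm_pos_iff.2 ha₀)).2 ha
    rw [← apply_eq_of_tendsto_pow_mul hf (mul_invariant_inv ha₀ h) (z := 1)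
      (by simpa using tendsto_coe_pow_infty ha'), eq_zero]
  | coe z => exact eq_zero z

theorem norm_eq_one_of_mul_invariant [ProperSpace 𝕜] [TopologicalSpace X] [T2Space X]
    {f : OnePoint 𝕜 → X} (hf : Continuous f) (hnc : ∃ x y, f x ≠ f y) {a : 𝕜} (ha₀ : a ≠ 0)
    (h : ∀ z : 𝕜, f ↑(a * z) = f ↑z) : ‖a‖ = 1 := by
  obtain ⟨x, y, hxy⟩ := hnc
  by_contra hne
  obtain ⟨b, hb₀, hb, hbf⟩ : ∃ b : 𝕜, b ≠ 0 ∧ ‖b‖ < 1 ∧ ∀ z : 𝕜, f ↑(b * z) = f ↑z := by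
    rcases lt_or_gt_of_ne hne with hlt | hgt
    · exact ⟨a, ha₀, hlt, h⟩
    · refine ⟨a⁻¹, inv_ne_zero ha₀, ?_, mul_invariant_inv ha₀ h⟩
      rw [norm_inv]
      exact inv_lt_one_of_one_lt₀ hgt
  exact hxy ((eq_const_of_mul_invariant hf hb₀ hb hbf x).trans
    (eq_const_of_mul_invariant hf hb₀ hb hbf y).symm)

end

theorem comp_gA_eq_self_iff {X : Type*} [TopologicalSpace X] (f : C(OnePoint ℂ, X)) {a : ℂ}
    (ha : a ≠ 0) : f.comp (gA a ha) = f ↔ ∀ z : ℂ, f ↑(a * z) = f ↑z := by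
  refine ⟨fun h z => congr($h z), fun h => ContinuousMap.ext fun x => ?_⟩
  induction x using OnePoint.rec with
  | infty => rfl
  | coe z => exact h z

theorem isClosed_setOf_mul_invariant {X : Type*} [TopologicalSpace X] [T2Space X]
    {f : OnePoint ℂ → X} (hf : Continuous f) :
    IsClosed {a : ℂ | ∀ z : ℂ, f ↑(a * z) = f ↑z} := by
  simp only [Set.ofPred_forall]
  exact isClosed_iInter fun z =>
    isClosed_eq (hf.comp (continuous_coe.comp (continuous_mul_const z))) continuous_const

/-- The stabilizer of a nonconstant continuous map `f : Σ → M` under the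
`ℂ*`-reparametrization action is a compact subset of `ℂ`. -/
theorem stabilizer_compact {M : Type*} [MetricSpace M] [CompactSpace M]
    (f : C(OnePoint ℂ, M)) (hf : ∃ x y, f x ≠ f y) :
    IsCompact {a : ℂ | ∃ ha : a ≠ 0, f.comp (gA a ha) = f} := by
  have hS : {a : ℂ | ∃ ha : a ≠ 0, f.comp (gA a ha) = f} =
      Metric.sphere 0 1 ∩ {a : ℂ | ∀ z : ℂ, f ↑(a * z) = f ↑z} := by
    ext a
    simp only [Set.mem_ofPred_eq, Set.mem_inter_iff, mem_sphere_zero_iff_norm]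
    constructor
    · rintro ⟨ha, h⟩
      rw [comp_gA_eq_self_iff f ha] at h
      exact ⟨norm_eq_one_of_mul_invariant f.continuous hf ha h, h⟩
    · rintro ⟨h1, h⟩
      have ha : a ≠ 0 := norm_ne_zero_iff.1 (h1 ▸ one_ne_zero)
      exact ⟨ha, (comp_gA_eq_self_iff f ha).2 h⟩
  rw [hS]
  exact (isCompact_sphere 0 1).inter_right (isClosed_setOf_mul_invariant f.continuous)
end

section
/- Let f₁ and f₂ be nonconstant maps in C(Σ, M) that are not in the same ℂ*-orbit, i.e. there is no nonzero a ∈ ℂ with f₂ = f₁ ∘ g_a. Then there exist ε₁ > 0 and ε₂ > 0 such that for every h ∈ C(Σ, M) with d(h, f₁) < ε₁ and every nonzero a ∈ ℂ, one has d(h ∘ g_a, f₂) ≥ ε₂; that is, the saturation G·U_{ε₁}(f₁) of the ε₁-neighborhood of f₁ does not meet the ε₂-neighborhood of f₂. -/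
/-!
It suffices to find `ε > 0` with `ε ≤ d(f₁ ∘ g_a, f₂)` for all `a ≠ 0`: since composing with
`g_a` does not increase uniform distances, `ε₁ = ε₂ = ε / 2` then work. If there is no such `ε`, there are
`aₙ ∈ ℂ*` with `f₁ ∘ g_{aₙ} → f₂` uniformly. Along a subsequence `aₙ` converges in the compact
sphere to some `x`, and `f₂ p = lim f₁ (aₙ p)` pointwise. If `x = b ∈ ℂ*` this says
`f₂ = f₁ ∘ g_b`; if `x = 0` or `x = ∞` it says that `f₂` equals the constant `f₁ x` on the dense
set `ℂ*`, so `f₂` is constant.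
-/

open OnePoint

open Filter Topology

namespace ContinuousMap

variable {X Y Z : Type*} [TopologicalSpace X] [CompactSpace X] [TopologicalSpace Y]
  [CompactSpace Y] [MetricSpace Z]

theorem dist_comp_le_dist (f g : C(Y, Z)) (φ : C(X, Y)) :
    dist (f.comp φ) (g.comp φ) ≤ dist f g :=
  (dist_le dist_nonneg).2 fun x => dist_apply_le_dist (φ x)

end ContinuousMap

namespace OnePoint

theorem dense_image_coe_compl_singleton_s9 {X : Type*} [TopologicalSpace X] [NoncompactSpace X]
    (x : X) [(𝓝[≠] x).NeBot] : Dense (((↑) : X → OnePoint X) '' {x}ᶜ) :=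
  denseRange_coe.dense_image continuous_coe (dense_compl_singleton x)

theorem eq_const_of_forall_coe_ne {X Y : Type*} [TopologicalSpace X] [NoncompactSpace X]
    [TopologicalSpace Y] [T2Space Y] {x : X} [(𝓝[≠] x).NeBot] {f : OnePoint X → Y}
    (hf : Continuous f) {c : Y} (h : ∀ z, z ≠ x → f z = c) (p : OnePoint X) : f p = c := by
  refine congrFun (hf.ext_on (dense_image_coe_compl_singleton_s9 x) continuous_const ?_) p
  rintro _ ⟨z, hz, rfl⟩
  exact h z hz

end OnePoint

section

variable {ι : Type*} {l : Filter ι} {a : ι → ℂ}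

theorem tendsto_map_mul_of_tendsto {b : ℂ} (hb : Tendsto a l (𝓝 b)) (p : OnePoint ℂ) :
    Tendsto (fun i => OnePoint.map (a i * ·) p) l (𝓝 (OnePoint.map (b * ·) p)) := by
  cases p with
  | infty => exact tendsto_const_nhds
  | coe z => exact (continuous_coe.tendsto _).comp (hb.mul_const z)

theorem tendsto_map_mul_of_tendsto_infty (ha : Tendsto (fun i => (a i : OnePoint ℂ)) l (𝓝 ∞))
    {z : ℂ} (hz : z ≠ 0) :
    Tendsto (fun i => OnePoint.map (a i * ·) (z : OnePoint ℂ)) l (𝓝 ∞) :=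
  ((Homeomorph.onePointCongr (Homeomorph.mulRight₀ z hz)).continuous.tendsto ∞).comp ha

variable {M : Type*}

theorem const_or_eq_comp_gA_of_tendsto [TopologicalSpace M] [T2Space M] [l.NeBot]
    {f₁ f₂ : C(OnePoint ℂ, M)} {x : OnePoint ℂ}
    (hx : Tendsto (fun i => (a i : OnePoint ℂ)) l (𝓝 x))
    (hf : ∀ p, Tendsto (fun i => f₁ (OnePoint.map (a i * ·) p)) l (𝓝 (f₂ p))) :
    (∃ c, ∀ p, f₂ p = c) ∨ ∃ (b : ℂ) (hb : b ≠ 0), f₂ = f₁.comp (gA b hb) := by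
  cases x with
  | infty =>
    refine .inl ⟨f₁ ∞, eq_const_of_forall_coe_ne (x := 0) f₂.continuous fun z hz => ?_⟩
    exact tendsto_nhds_unique (hf z)
      ((f₁.continuous.tendsto ∞).comp (tendsto_map_mul_of_tendsto_infty hx hz))
  | coe b =>
    have hb : Tendsto a l (𝓝 b) := isOpenEmbedding_coe.isEmbedding.tendsto_nhds_iff.2 hx
    have hlim (p : OnePoint ℂ) : f₂ p = f₁ (OnePoint.map (b * ·) p) :=
      tendsto_nhds_unique (hf p) ((f₁.continuous.tendsto _).comp (tendsto_map_mul_of_tendsto hb p))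
    by_cases hb0 : b = 0
    · subst hb0
      exact .inl ⟨f₁ (0 : ℂ), eq_const_of_forall_coe_ne (x := 0) f₂.continuous fun z _ => by
        simp [hlim]⟩
    · exact .inr ⟨b, hb0, ContinuousMap.ext hlim⟩

theorem exists_pos_le_dist_comp_gA [MetricSpace M] (f₁ f₂ : C(OnePoint ℂ, M))
    (hf₂ : ∃ x y, f₂ x ≠ f₂ y) (horb : ¬ ∃ (a : ℂ) (ha : a ≠ 0), f₂ = f₁.comp (gA a ha)) :
    ∃ ε > 0, ∀ (a : ℂ) (ha : a ≠ 0), ε ≤ dist (f₁.comp (gA a ha)) f₂ := by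
  by_contra! hcon
  choose a ha hd using fun n : ℕ => hcon (1 / (n + 1)) Nat.one_div_pos_of_nat
  have hunif : Tendsto (fun n => f₁.comp (gA (a n) (ha n))) atTop (𝓝 f₂) :=
    tendsto_iff_dist_tendsto_zero.2 <| squeeze_zero (fun _ => dist_nonneg) (fun n => (hd n).le)
      tendsto_one_div_add_atTop_nhds_zero_nat
  -- Passing to an ultrafilter finer than `atTop` replaces extracting a convergent subsequence.
  set U := Ultrafilter.of (atTop : Filter ℕ)
  have hpt (p : OnePoint ℂ) :
      Tendsto (fun n => f₁ (OnePoint.map (a n * ·) p)) U (𝓝 (f₂ p)) :=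
    ((continuous_eval_const p).tendsto f₂).comp (hunif.mono_left (Ultrafilter.of_le _))
  rcases const_or_eq_comp_gA_of_tendsto (U.map _).le_nhds_lim hpt with ⟨c, hc⟩ | horb'
  · obtain ⟨p, q, hpq⟩ := hf₂
    exact hpq ((hc p).trans (hc q).symm)
  · exact horb horb'

end

theorem saturation_misses_neighbourhood_general {M : Type*} [MetricSpace M]
    (f₁ f₂ : C(OnePoint ℂ, M))
    (hf₂ : ∃ x y, f₂ x ≠ f₂ y)
    (horb : ¬ ∃ (a : ℂ) (ha : a ≠ 0), f₂ = f₁.comp (gA a ha)) :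
    ∃ ε₁ > 0, ∃ ε₂ > 0,
      ∀ h : C(OnePoint ℂ, M), dist h f₁ < ε₁ →
        ∀ (a : ℂ) (ha : a ≠ 0), ε₂ ≤ dist (h.comp (gA a ha)) f₂ := by
  obtain ⟨ε, hε, hkey⟩ := exists_pos_le_dist_comp_gA f₁ f₂ hf₂ horb
  refine ⟨ε / 2, half_pos hε, ε / 2, half_pos hε, fun h hh a ha => ?_⟩
  have := hkey a ha
  have := h.dist_comp_le_dist f₁ (gA a ha)
  have := dist_triangle_left (f₁.comp (gA a ha)) f₂ (h.comp (gA a ha))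
  linarith

/-- For nonconstant maps `f₁, f₂` not in the same `ℂ*`-orbit, the saturation of a small
neighbourhood of `f₁` stays at distance `≥ ε₂` from `f₂`. -/
theorem saturation_misses_neighbourhood {M : Type*} [MetricSpace M] [CompactSpace M]
    (f₁ f₂ : C(OnePoint ℂ, M))
    (hf₁ : ∃ x y, f₁ x ≠ f₁ y) (hf₂ : ∃ x y, f₂ x ≠ f₂ y)
    (horb : ¬ ∃ (a : ℂ) (ha : a ≠ 0), f₂ = f₁.comp (gA a ha)) :
    ∃ ε₁ > 0, ∃ ε₂ > 0,
      ∀ h : C(OnePoint ℂ, M), dist h f₁ < ε₁ →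
        ∀ (a : ℂ) (ha : a ≠ 0), ε₂ ≤ dist (h.comp (gA a ha)) f₂ :=
  saturation_misses_neighbourhood_general f₁ f₂ hf₂ horb
end

section
/- Let c₁ and c₂ be distinct points of M, and let f₁, f₂ ∈ C(Σ, M) be the constant maps with values c₁ and c₂ respectively. Then there exist ε₁ > 0 and ε₂ > 0 such that the saturated sets { h ∘ g_a : d(h, f₁) < ε₁, a ∈ ℂ, a ≠ 0 } and { h ∘ g_a : d(h, f₂) < ε₂, a ∈ ℂ, a ≠ 0 } are disjoint. (Indeed any ε_i with ε₁ + ε₂ < dist(c₁, c₂) work, since the image of h ∘ g_a equals the image of h.) -/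
open OnePoint

/-- Two distinct constant maps `Σ → M` admit disjoint saturated (`ℂ*`-invariant)
neighbourhoods. -/
theorem G_separation_constant_maps {M : Type*} [MetricSpace M] [CompactSpace M]
    (c₁ c₂ : M) (hc : c₁ ≠ c₂) :
    ∃ ε₁ > 0, ∃ ε₂ > 0,
      Disjoint
        {k : C(OnePoint ℂ, M) | ∃ (h : C(OnePoint ℂ, M)) (a : ℂ) (ha : a ≠ 0),
          dist h (ContinuousMap.const (OnePoint ℂ) c₁) < ε₁ ∧ k = h.comp (gA a ha)}
        {k : C(OnePoint ℂ, M) | ∃ (h : C(OnePoint ℂ, M)) (a : ℂ) (ha : a ≠ 0),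
          dist h (ContinuousMap.const (OnePoint ℂ) c₂) < ε₂ ∧ k = h.comp (gA a ha)} := by
  have hd : 0 < dist c₁ c₂ := dist_pos.2 hc
  refine ⟨dist c₁ c₂ / 2, by linarith, dist c₁ c₂ / 2, by linarith, ?_⟩
  rw [Set.disjoint_left]
  rintro k ⟨h₁, a₁, ha₁, hd₁, rfl⟩ ⟨h₂, a₂, ha₂, hd₂, hk⟩
  have e1 : h₁ (gA a₁ ha₁ ∞) = h₂ (gA a₂ ha₂ ∞) := by
    have := congrArg (fun f : C(OnePoint ℂ, M) => f ∞) hk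
    simpa using this
  have g1 : gA a₁ ha₁ ∞ = ∞ := rfl
  have g2 : gA a₂ ha₂ ∞ = ∞ := rfl
  rw [g1, g2] at e1
  have h1 : dist (h₁ ∞) c₁ < dist c₁ c₂ / 2 :=
    lt_of_le_of_lt (ContinuousMap.dist_apply_le_dist (f := h₁) (g := ContinuousMap.const (OnePoint ℂ) c₁) ∞) hd₁
  have h2 : dist (h₂ ∞) c₂ < dist c₁ c₂ / 2 :=
    lt_of_le_of_lt (ContinuousMap.dist_apply_le_dist (f := h₂) (g := ContinuousMap.const (OnePoint ℂ) c₂) ∞) hd₂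
  have := dist_triangle c₁ (h₁ ∞) c₂
  rw [dist_comm c₁ (h₁ ∞), e1] at this
  rw [e1] at h1
  linarith
end

section
/- Let f₁ and f₂ be any two maps in C(Σ, M) (constant maps allowed) that are not in the same ℂ*-orbit, i.e. there is no nonzero a ∈ ℂ with f₂ = f₁ ∘ g_a. Then there exist ε₁ > 0 and ε₂ > 0 such that the saturated sets { h ∘ g_a : d(h, f₁) < ε₁, a ∈ ℂ, a ≠ 0 } and { h ∘ g_a : d(h, f₂) < ε₂, a ∈ ℂ, a ≠ 0 } are disjoint. (The full ℂ*-space C(Σ, M) is G-Hausdorff.) -/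
/-!
If the saturated neighbourhoods of `f₁` and `f₂` met for all `ε₁, ε₂ > 0`, then `f₂` would lie
in the closure of the orbit `{f₁ ∘ g_a}`. This orbit is closed: along an ultrafilter the scaling
factors converge to some `p` in the compact sphere `Σ`. If `p ∈ ℂ*`, pointwise limits give
`f₂ = f₁ ∘ g_p`. If `p = ∞`, evaluating `f₁ ∘ g_a` at `w` and at `w / a` forces `f₁` and `f₂` to be
the same constant map. The case `p = 0` reduces to `p = ∞` by exchanging `f₁, f₂` and `a, a⁻¹`,
since composition with `g_a` is an isometry of `C(Σ, M)`.
-/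

open OnePoint

open Filter Topology Bornology

theorem OnePoint.tendsto_coe_nhds_infty_iff {X ι : Type*} [PseudoMetricSpace X] [ProperSpace X]
    {l : Filter ι} {c : ι → X} :
    Tendsto (fun i => (c i : OnePoint X)) l (𝓝 ∞) ↔ Tendsto c l (cobounded X) := by
  rw [Metric.cobounded_eq_cocompact, ← coclosedCompact_eq_cocompact, ← comap_coe_nhds_infty,
    tendsto_comap_iff]
  rfl

section Topological

variable {M : Type*} [TopologicalSpace M]

noncomputable def rescale (f : C(OnePoint ℂ, M)) (a : ℂˣ) : C(OnePoint ℂ, M) :=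
  f.comp (gA a a.ne_zero)

@[simp]
lemma rescale_apply_coe (f : C(OnePoint ℂ, M)) (a : ℂˣ) (z : ℂ) :
    rescale f a z = f ((a * z : ℂ) : OnePoint ℂ) := rfl

@[simp]
lemma rescale_apply_infty (f : C(OnePoint ℂ, M)) (a : ℂˣ) : rescale f a ∞ = f ∞ := rfl

@[simp]
lemma rescale_one (f : C(OnePoint ℂ, M)) : rescale f 1 = f := by
  ext z
  induction z using OnePoint.rec <;> simp

lemma rescale_rescale (f : C(OnePoint ℂ, M)) (a b : ℂˣ) :
    rescale (rescale f a) b = rescale f (a * b) := by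
  ext z
  induction z using OnePoint.rec <;> simp [mul_assoc]

lemma eq_rescale_of_rescale_eq {h₁ h₂ : C(OnePoint ℂ, M)} {a b : ℂˣ}
    (h : rescale h₁ a = rescale h₂ b) : h₂ = rescale h₁ (a * b⁻¹) := by
  rw [← rescale_rescale, h, rescale_rescale, mul_inv_cancel, rescale_one]

variable [T2Space M] {ι : Type*} {l : Filter ι} [l.NeBot] {f g : C(OnePoint ℂ, M)} {c : ι → ℂˣ}

lemma eq_of_tendsto_rescale_of_tendsto_cobounded
    (hc : Tendsto (fun i => (c i : ℂ)) l (cobounded ℂ))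
    (hfg : Tendsto (fun i => rescale f (c i)) l (𝓝 g)) : g = f := by
  have hc_infty : Tendsto (fun i => ((c i : ℂ) : OnePoint ℂ)) l (𝓝 ∞) :=
    OnePoint.tendsto_coe_nhds_infty_iff.2 hc
  have hf_coe : ∀ w : ℂ, f w = g (0 : ℂ) := by
    intro w
    have hw : Tendsto (fun i => (((c i)⁻¹ * w : ℂ) : OnePoint ℂ)) l (𝓝 ((0 : ℂ) : OnePoint ℂ)) :=
      (continuous_coe.tendsto 0).comp <| by
        simpa using (tendsto_inv₀_cobounded.comp hc).mul_const w
    refine tendsto_nhds_unique (tendsto_const_nhds.congr fun i => ?_) (hfg.eval hw)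
    simp
  have hf_infty : f ∞ = g (0 : ℂ) :=
    tendsto_nhds_unique ((f.continuous.tendsto ∞).comp hc_infty)
      (tendsto_const_nhds.congr fun i => (hf_coe _).symm)
  have hg_coe : ∀ w : ℂ, w ≠ 0 → g w = f ∞ := by
    intro w hw
    have hcw : Tendsto (fun i => ((c i * w : ℂ) : OnePoint ℂ)) l (𝓝 ∞) :=
      OnePoint.tendsto_coe_nhds_infty_iff.2 ((tendsto_mul_right_cobounded hw).comp hc)
    exact tendsto_nhds_unique (hfg.eval_const _) ((f.continuous.tendsto ∞).comp hcw)
  ext z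
  induction z using OnePoint.rec with
  | infty => exact tendsto_nhds_unique (hfg.eval_const ∞) tendsto_const_nhds
  | coe w =>
    rcases eq_or_ne w 0 with rfl | hw
    · exact (hf_coe 0).symm
    · rw [hg_coe w hw, hf_infty, hf_coe]

lemma eq_rescale_of_tendsto_rescale {a : ℂˣ} (hc : Tendsto (fun i => (c i : ℂ)) l (𝓝 a))
    (hfg : Tendsto (fun i => rescale f (c i)) l (𝓝 g)) : g = rescale f a := by
  ext z
  induction z using OnePoint.rec with
  | infty => exact tendsto_nhds_unique (hfg.eval_const ∞) tendsto_const_nhds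
  | coe w =>
    refine tendsto_nhds_unique (hfg.eval_const _) ?_
    exact (f.continuous.tendsto _).comp ((continuous_coe.tendsto _).comp (hc.mul_const w))

end Topological

section Metric

variable {M : Type*} [PseudoMetricSpace M]

@[simp]
lemma dist_rescale (f h : C(OnePoint ℂ, M)) (a : ℂˣ) :
    dist (rescale f a) (rescale h a) = dist f h := by
  have dist_rescale_le : ∀ (f h : C(OnePoint ℂ, M)) (a : ℂˣ),
      dist (rescale f a) (rescale h a) ≤ dist f h := fun f h a =>
    (ContinuousMap.dist_le dist_nonneg).2 fun z =>
      ContinuousMap.dist_apply_le_dist (gA a a.ne_zero z)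
  refine (dist_rescale_le f h a).antisymm ?_
  simpa [rescale_rescale] using dist_rescale_le (rescale f a) (rescale h a) a⁻¹

lemma tendsto_rescale_inv {ι : Type*} {l : Filter ι} {f g : C(OnePoint ℂ, M)} {c : ι → ℂˣ}
    (hfg : Tendsto (fun i => rescale f (c i)) l (𝓝 g)) :
    Tendsto (fun i => rescale g (c i)⁻¹) l (𝓝 f) := by
  rw [tendsto_iff_dist_tendsto_zero] at hfg ⊢
  refine hfg.congr fun i => ?_
  rw [← dist_rescale _ _ (c i)⁻¹, rescale_rescale, mul_inv_cancel, rescale_one, dist_comm]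

end Metric

lemma isClosed_range_rescale {M : Type*} [MetricSpace M] (f : C(OnePoint ℂ, M)) :
    IsClosed (Set.range (rescale f)) := by
  refine isClosed_of_closure_subset fun g hg => ?_
  have hcluster : MapClusterPt g ⊤ (rescale f) := by
    rwa [MapClusterPt, map_top, ← mem_closure_iff_clusterPt]
  obtain ⟨U, -, hfg⟩ := mapClusterPt_iff_ultrafilter.1 hcluster
  obtain ⟨p, hp⟩ : ∃ p, Tendsto (fun a : ℂˣ => ((a : ℂ) : OnePoint ℂ)) U (𝓝 p) :=
    ⟨_, (U.map fun a : ℂˣ => ((a : ℂ) : OnePoint ℂ)).le_nhds_lim⟩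
  induction p using OnePoint.rec with
  | infty =>
    exact ⟨1, by rw [rescale_one, eq_of_tendsto_rescale_of_tendsto_cobounded (c := id)
      (OnePoint.tendsto_coe_nhds_infty_iff.1 hp) hfg]⟩
  | coe ξ =>
    have hξ : Tendsto (fun a : ℂˣ => (a : ℂ)) U (𝓝 ξ) :=
      isOpenEmbedding_coe.tendsto_nhds_iff.2 hp
    rcases eq_or_ne ξ 0 with rfl | hξ0
    · have hinv : Tendsto (fun a : ℂˣ => ((a⁻¹ : ℂˣ) : ℂ)) U (cobounded ℂ) := by
        simpa [Function.comp_def] using tendsto_inv₀_nhdsNE_zero.comp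
          (tendsto_nhdsWithin_of_tendsto_nhds_of_eventually_within _ hξ
            (Eventually.of_forall Units.ne_zero))
      exact ⟨1, by rw [rescale_one,
        eq_of_tendsto_rescale_of_tendsto_cobounded hinv (tendsto_rescale_inv (c := id) hfg)]⟩
    · exact ⟨Units.mk0 ξ hξ0,
        (eq_rescale_of_tendsto_rescale (c := id) (a := Units.mk0 ξ hξ0) hξ hfg).symm⟩

theorem G_Hausdorff_full_general {M : Type*} [MetricSpace M]
    (f₁ f₂ : C(OnePoint ℂ, M))
    (horb : ¬ ∃ (a : ℂ) (ha : a ≠ 0), f₂ = f₁.comp (gA a ha)) :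
    ∃ ε₁ > 0, ∃ ε₂ > 0,
      Disjoint
        {k : C(OnePoint ℂ, M) | ∃ (h : C(OnePoint ℂ, M)) (a : ℂ) (ha : a ≠ 0),
          dist h f₁ < ε₁ ∧ k = h.comp (gA a ha)}
        {k : C(OnePoint ℂ, M) | ∃ (h : C(OnePoint ℂ, M)) (a : ℂ) (ha : a ≠ 0),
          dist h f₂ < ε₂ ∧ k = h.comp (gA a ha)} := by
  by_contra H
  push Not at H
  have hclosure : f₂ ∈ closure (Set.range (rescale f₁)) := by
    refine Metric.mem_closure_range_iff.2 fun ε hε => ?_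
    obtain ⟨_, ⟨h₁, a, ha, hd₁, rfl⟩, ⟨h₂, b, hb, hd₂, hk⟩⟩ :=
      Set.not_disjoint_iff.1 (H _ (half_pos hε) _ (half_pos hε))
    obtain rfl := eq_rescale_of_rescale_eq (a := Units.mk0 a ha) (b := Units.mk0 b hb) hk
    refine ⟨Units.mk0 a ha * (Units.mk0 b hb)⁻¹, ?_⟩
    calc dist f₂ (rescale f₁ _) ≤ dist f₂ (rescale h₁ _) + dist (rescale h₁ _) (rescale f₁ _) :=
          dist_triangle _ _ _
      _ < ε / 2 + ε / 2 := by
        rw [dist_comm f₂, dist_rescale]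
        exact add_lt_add hd₂ hd₁
      _ = ε := add_halves ε
  obtain ⟨a, ha⟩ := (isClosed_range_rescale f₁).closure_subset hclosure
  exact horb ⟨a, a.ne_zero, ha.symm⟩

/-- Any two continuous maps `Σ → M` (constant maps allowed) not in the same `ℂ*`-orbit admit
disjoint saturated (`ℂ*`-invariant) neighbourhoods: the full `ℂ*`-space `C(Σ, M)` is
G-Hausdorff. -/
theorem G_Hausdorff_full {M : Type*} [MetricSpace M] [CompactSpace M]
    (f₁ f₂ : C(OnePoint ℂ, M))
    (horb : ¬ ∃ (a : ℂ) (ha : a ≠ 0), f₂ = f₁.comp (gA a ha)) :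
    ∃ ε₁ > 0, ∃ ε₂ > 0,
      Disjoint
        {k : C(OnePoint ℂ, M) | ∃ (h : C(OnePoint ℂ, M)) (a : ℂ) (ha : a ≠ 0),
          dist h f₁ < ε₁ ∧ k = h.comp (gA a ha)}
        {k : C(OnePoint ℂ, M) | ∃ (h : C(OnePoint ℂ, M)) (a : ℂ) (ha : a ≠ 0),
          dist h f₂ < ε₂ ∧ k = h.comp (gA a ha)} :=
  G_Hausdorff_full_general f₁ f₂ horb
end
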